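/- arXiv:1311.0154 — 2 statements merged into one kernel-verified Lean document; each statement's English description precedes it below -/
import Mathlib

section
/- Assume α ∈ (1,3/2), G(−v) = −G(v) and G(v)·v ≥ G*|v|^{2α} for all v ∈ ℝ^d with G* > 0, Φ(|x|) ≥ Φ* > 0 and |F(|x|²)x| ≤ F* for all x ∈ ℝ^d, with F* < 2^{α−1/2} Φ* G*; set C* = 2^α Φ* G* − √2 F* > 0. Let (f_t)_{t∈[0,T)} be a weak solution of the kinetic flocking equation with compactly supported measures. Then: if 𝒢[f₀] > 0, then 𝒢[f_t] ≤ (𝒢[f₀]^{1−α} + (α−1) C* t)^{−1/(α−1)} for all t ∈ [0,T); and if 𝒢[f₀] = 0, then 𝒢[f_t] = 0 for all t ∈ [0,T). -/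
open MeasureTheory Filter
open scoped RealInnerProductSpace BigOperators ENNReal

noncomputable section

abbrev Euc (d : ℕ) := EuclideanSpace ℝ (Fin d)

abbrev Phase (d : ℕ) := Euc d × Euc d

/-- Euclidean norm on the phase space ℝ^d × ℝ^d ≅ ℝ^{2d}. -/
noncomputable def pnorm {d : ℕ} (z : Phase d) : ℝ :=
  Real.sqrt (‖z.1‖ ^ 2 + ‖z.2‖ ^ 2)

/-- Closed ball of radius `R` (Euclidean norm) in the phase space ℝ^{2d}. -/
def pball (d : ℕ) (R : ℝ) : Set (Phase d) := {z | pnorm z ≤ R}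

/-- Velocity fluctuation 𝒢[f]. -/
noncomputable def velFluc {d : ℕ} (f : Measure (Phase d)) : ℝ :=
  (∫ z, ‖z.2‖ ^ 2 ∂f) - ‖∫ z, z.2 ∂f‖ ^ 2

/-- Position fluctuation Γ[f]. -/
noncomputable def posFluc {d : ℕ} (f : Measure (Phase d)) : ℝ :=
  (∫ z, ‖z.1‖ ^ 2 ∂f) - ‖∫ z, z.1 ∂f‖ ^ 2

/-- Interaction field H_[f]. -/
noncomputable def Hfield {d : ℕ} (Φ : ℝ → ℝ) (G : Euc d → Euc d) (F : ℝ → ℝ) (α : ℝ)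
    (f : Measure (Phase d)) (x v : Euc d) : Euc d :=
  - (∫ z, Φ ‖x - z.1‖ • G (v - z.2) ∂f)
    + velFluc f ^ ((2 * α - 1) / 2) • ∫ z, F (‖x - z.1‖ ^ 2) • (x - z.1) ∂f

/-- A family of compactly supported Borel probability measures is a weak solution of the
kinetic flocking equation on the time set `I` if for every `C¹` test function `φ` the map
`t ↦ ∫ φ d f_t` is differentiable (within `I`) with the stated derivative. -/
def IsWeakSolution {d : ℕ} (Φ : ℝ → ℝ) (G : Euc d → Euc d) (F : ℝ → ℝ) (α : ℝ)
    (I : Set ℝ) (f : ℝ → Measure (Phase d)) : Prop :=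
  (∀ t ∈ I, IsProbabilityMeasure (f t) ∧ ∃ K : Set (Phase d), IsCompact K ∧ f t Kᶜ = 0) ∧
  ∀ φ : Phase d → ℝ, ContDiff ℝ 1 φ → ∀ t ∈ I,
    HasDerivWithinAt (fun s => ∫ z, φ z ∂(f s))
      (∫ z, fderiv ℝ φ z (z.2, Hfield Φ G F α (f t) z.1 z.2) ∂(f t)) I t

/-- Measure-valued solution of the kinetic flocking equation on a time set `I ∋ 0`,
given by a family of compactly supported probability measures together with a flow map `𝒯`. -/
def IsMVSolution {d : ℕ} (Φ : ℝ → ℝ) (G : Euc d → Euc d) (F : ℝ → ℝ) (α : ℝ)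
    (I : Set ℝ) (f₀ : Measure (Phase d)) (f : ℝ → Measure (Phase d))
    (T : ℝ → Phase d → Phase d) : Prop :=
  (0 : ℝ) ∈ I ∧
  ContinuousOn (fun p : ℝ × Phase d => T p.1 p.2) (I ×ˢ Set.univ) ∧
  T 0 = id ∧
  (∀ t ∈ I, IsProbabilityMeasure (f t) ∧ ∃ K : Set (Phase d), IsCompact K ∧ f t Kᶜ = 0) ∧
  (∀ z₀ : Phase d, ∀ t ∈ I,
    HasDerivWithinAt (fun s => T s z₀)
      ((T t z₀).2, Hfield Φ G F α (f t) (T t z₀).1 (T t z₀).2) I t) ∧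
  (∀ t ∈ I, f t = f₀.map (T t))

/-- `π` is a coupling of `f` and `g`. -/
def IsCoupling {d : ℕ} (π : Measure (Phase d × Phase d)) (f g : Measure (Phase d)) : Prop :=
  π.map Prod.fst = f ∧ π.map Prod.snd = g

/-- The Monge–Kantorovich–Rubinstein distance W₁ (with the Euclidean cost on ℝ^{2d}). -/
noncomputable def W1 {d : ℕ} (f g : Measure (Phase d)) : ℝ :=
  sInf {c : ℝ | ∃ π : Measure (Phase d × Phase d), IsProbabilityMeasure π ∧ IsCoupling π f g ∧
    Integrable (fun p => pnorm (p.1 - p.2)) π ∧ c = ∫ p, pnorm (p.1 - p.2) ∂π}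

end

/-!
Writing `k(z, z')` for the antisymmetric interaction kernel, so that `H_[μ](z) = ∫ k(z, z') dμ(z')`,
the weak formulation with the test functions `|v|²` and `v` gives
`d𝒢/dt = ∫∫ ⟨v - v', k(z, z')⟩ dμ dμ` after symmetrization (the mean velocity is conserved).
Coercivity of `G` and Jensen's inequality bound the alignment part by `-2^α Φ* G* 𝒢^α`, while
Cauchy–Schwarz bounds the attraction part by `𝒢^((2α-1)/2) F* √(2𝒢) = √2 F* 𝒢^α`, so that
`d𝒢/dt ≤ -C* 𝒢^α`. Comparison with the explicit solutions of the Bernoulli equation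
`B' = -κ B^α` for `κ < C*`, and `κ → C*`, gives the decay bound; if `𝒢[f₀] = 0`, then `𝒢`
is nonincreasing and nonnegative, hence identically zero.
-/

open Set Topology

theorem rpow_sub_half_mul_sqrt {x a : ℝ} (hx : 0 ≤ x) (ha : a ≠ 0) :
    x ^ (a - 1 / 2) * √x = x ^ a := by
  rcases hx.eq_or_lt with rfl | hx
  · simp [Real.zero_rpow ha]
  · rw [Real.sqrt_eq_rpow, ← Real.rpow_add hx, sub_add_cancel]

noncomputable def bernoulliBarrier (α c κ t : ℝ) : ℝ :=
  (c + (α - 1) * κ * t) ^ (-(1 / (α - 1)))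

theorem hasDerivAt_bernoulliBarrier {α c κ t : ℝ} (hα : 1 < α) (h : 0 < c + (α - 1) * κ * t) :
    HasDerivAt (bernoulliBarrier α c κ) (-κ * bernoulliBarrier α c κ t ^ α) t := by
  have hα' : α - 1 ≠ 0 := by linarith
  have hlin : HasDerivAt (fun s => c + (α - 1) * κ * s) ((α - 1) * κ) t := by
    simpa using ((hasDerivAt_id t).const_mul ((α - 1) * κ)).const_add c
  refine ((Real.hasDerivAt_rpow_const (Or.inl h.ne')).comp t hlin).congr_deriv ?_
  rw [bernoulliBarrier, ← Real.rpow_mul h.le,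
    show -(1 / (α - 1)) * α = -(1 / (α - 1)) - 1 by field_simp; ring]
  field_simp

theorem bernoulliBarrier_zero {α c κ : ℝ} (hα : 1 < α) (hc : 0 < c) :
    bernoulliBarrier α (c ^ (1 - α)) κ 0 = c := by
  have hα' : α - 1 ≠ 0 := by linarith
  rw [bernoulliBarrier, mul_zero, add_zero, ← Real.rpow_mul hc.le,
    show (1 - α) * -(1 / (α - 1)) = 1 by field_simp; ring, Real.rpow_one]

theorem le_bernoulliBarrier_of_lt {g g' : ℝ → ℝ} {T C α κ : ℝ} (hα : 1 < α)
    (hg : ∀ t ∈ Ico 0 T, HasDerivWithinAt g (g' t) (Ico 0 T) t)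
    (hg' : ∀ t ∈ Ico 0 T, g' t ≤ -C * g t ^ α) (hg0 : 0 < g 0) (hκ : κ ∈ Ico 0 C)
    {t : ℝ} (ht : t ∈ Ico 0 T) : g t ≤ bernoulliBarrier α (g 0 ^ (1 - α)) κ t := by
  have hB : ∀ s ∈ Icc 0 t, 0 < g 0 ^ (1 - α) + (α - 1) * κ * s := fun s hs =>
    add_pos_of_pos_of_nonneg (Real.rpow_pos_of_pos hg0 _)
      (mul_nonneg (mul_nonneg (by linarith) hκ.1) hs.1)
  have hIcc : Icc 0 t ⊆ Ico 0 T := fun s hs => ⟨hs.1, hs.2.trans_lt ht.2⟩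
  have hIco : Ico 0 t ⊆ Ico 0 T := Ico_subset_Ico_right ht.2.le
  refine image_le_of_deriv_right_lt_deriv_boundary' (f := g)
    (fun s hs => (hg s (hIcc hs)).continuousWithinAt.mono hIcc)
    (fun s hs => (hg s (hIco hs)).mono_of_mem_nhdsWithin (Ico_mem_nhdsGE_of_mem (hIco hs)))
    (bernoulliBarrier_zero hα hg0).ge
    (fun s hs => (hasDerivAt_bernoulliBarrier hα (hB s hs)).continuousAt.continuousWithinAt)
    (fun s hs =>
      (hasDerivAt_bernoulliBarrier hα (hB s (Ico_subset_Icc_self hs))).hasDerivWithinAt)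
    (fun s hs hgB => ?_) ⟨ht.1, le_rfl⟩
  -- `κ < C` makes the barrier a strict supersolution, as the comparison principle requires.
  have hBα : 0 < bernoulliBarrier α (g 0 ^ (1 - α)) κ s ^ α :=
    Real.rpow_pos_of_pos (Real.rpow_pos_of_pos (hB s (Ico_subset_Icc_self hs)) _) _
  calc g' s ≤ -C * g s ^ α := hg' s (hIco hs)
    _ < -κ * bernoulliBarrier α (g 0 ^ (1 - α)) κ s ^ α := by rw [hgB]; nlinarith [hκ.2]

theorem le_bernoulliBarrier {g g' : ℝ → ℝ} {T C α : ℝ} (hα : 1 < α) (hC : 0 < C)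
    (hg : ∀ t ∈ Ico 0 T, HasDerivWithinAt g (g' t) (Ico 0 T) t)
    (hg' : ∀ t ∈ Ico 0 T, g' t ≤ -C * g t ^ α) (hg0 : 0 < g 0) {t : ℝ} (ht : t ∈ Ico 0 T) :
    g t ≤ bernoulliBarrier α (g 0 ^ (1 - α)) C t := by
  have hbase : 0 < g 0 ^ (1 - α) + (α - 1) * C * t :=
    add_pos_of_pos_of_nonneg (Real.rpow_pos_of_pos hg0 _)
      (mul_nonneg (mul_nonneg (by linarith) hC.le) ht.1)
  have hcont : ContinuousAt (fun κ => bernoulliBarrier α (g 0 ^ (1 - α)) κ t) C :=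
    (by fun_prop : ContinuousAt (fun κ => g 0 ^ (1 - α) + (α - 1) * κ * t) C).rpow_const
      (Or.inl hbase.ne')
  refine ge_of_tendsto (x := 𝓝[<] C) (hcont.tendsto.mono_left nhdsWithin_le_nhds) ?_
  filter_upwards [Ioo_mem_nhdsLT hC] with κ hκ
  exact le_bernoulliBarrier_of_lt hα hg hg' hg0 (Ioo_subset_Ico_self hκ) ht

theorem eq_zero_of_hasDerivWithinAt_le_neg_mul_rpow {g g' : ℝ → ℝ} {T C α : ℝ} (hC : 0 ≤ C)
    (hg : ∀ t ∈ Ico 0 T, HasDerivWithinAt g (g' t) (Ico 0 T) t)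
    (hg' : ∀ t ∈ Ico 0 T, g' t ≤ -C * g t ^ α) (hnonneg : ∀ t ∈ Ico 0 T, 0 ≤ g t) (hg0 : g 0 = 0)
    {t : ℝ} (ht : t ∈ Ico 0 T) : g t = 0 := by
  have hanti : AntitoneOn g (Ico 0 T) := by
    refine antitoneOn_of_hasDerivWithinAt_nonpos (f' := g') (convex_Ico 0 T)
      (fun s hs => (hg s hs).continuousWithinAt) (fun s hs => ?_) (fun s hs => ?_) <;>
      rw [interior_Ico] at hs
    · rw [interior_Ico]; exact (hg s (Ioo_subset_Ico_self hs)).mono Ioo_subset_Ico_self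
    · have := mul_nonneg hC (Real.rpow_nonneg (hnonneg s (Ioo_subset_Ico_self hs)) α)
      linarith [hg' s (Ioo_subset_Ico_self hs)]
  exact le_antisymm (hg0 ▸ hanti ⟨le_rfl, ht.1.trans_lt ht.2⟩ ht ht.1) (hnonneg t ht)

theorem hasDerivWithinAt_piLp {𝕜 ι : Type*} {E : ι → Type*} [NontriviallyNormedField 𝕜]
    [∀ i, NormedAddCommGroup (E i)] [∀ i, NormedSpace 𝕜 (E i)] [Fintype ι] {p : ENNReal}
    [Fact (1 ≤ p)] {f : 𝕜 → PiLp p E} {f' : PiLp p E} {s : Set 𝕜} {x : 𝕜} :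
    HasDerivWithinAt f f' s x ↔ ∀ i, HasDerivWithinAt (fun t => f t i) (f' i) s x := by
  simp only [hasDerivWithinAt_iff_hasFDerivWithinAt, hasFDerivWithinAt_piLp]
  rfl

theorem Continuous.integrable_of_measure_compl_eq_zero {X E : Type*} [TopologicalSpace X]
    [T2Space X] [MeasurableSpace X] [OpensMeasurableSpace X] [NormedAddCommGroup E]
    {μ : Measure X} [IsFiniteMeasure μ] {K : Set X} (hK : IsCompact K) (hμK : μ Kᶜ = 0)
    {g : X → E} (hg : Continuous g) : Integrable g μ := by
  rw [← Measure.restrict_eq_self_of_ae_mem (ae_iff.2 hμK)]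
  exact hg.continuousOn.integrableOn_compact hK

theorem Measure.prod_compl_prod_eq_zero {X Y : Type*} [MeasurableSpace X] [MeasurableSpace Y]
    {μ : Measure X} {ν : Measure Y} [SFinite ν] {s : Set X} {t : Set Y} (hs : μ sᶜ = 0)
    (ht : ν tᶜ = 0) : μ.prod ν (s ×ˢ t)ᶜ = 0 := by
  rw [compl_prod_eq_union]
  exact measure_union_null (by simp [Measure.prod_prod, hs]) (by simp [Measure.prod_prod, ht])

theorem Continuous.integrable_prod_of_measure_compl_eq_zero {X E : Type*} [TopologicalSpace X]
    [T2Space X] [SecondCountableTopology X] [MeasurableSpace X] [OpensMeasurableSpace X]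
    [NormedAddCommGroup E] {μ : Measure X} [IsFiniteMeasure μ] {K : Set X} (hK : IsCompact K)
    (hμK : μ Kᶜ = 0) {g : X × X → E} (hg : Continuous g) : Integrable g (μ.prod μ) :=
  hg.integrable_of_measure_compl_eq_zero (hK.prod hK) (Measure.prod_compl_prod_eq_zero hμK hμK)

theorem two_mul_integral_inner_integral_of_antisymm {X E : Type*} [MeasurableSpace X]
    {μ : Measure X} [SFinite μ] [NormedAddCommGroup E] [InnerProductSpace ℝ E] [CompleteSpace E]
    {a : X → E} {k : X × X → E} (hk : ∀ p, k p.swap = -k p)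
    (hk_int : ∀ x, Integrable (fun y => k (x, y)) μ)
    (hak : Integrable (fun p => ⟪a p.1, k p⟫) (μ.prod μ)) :
    2 * ∫ x, ⟪a x, ∫ y, k (x, y) ∂μ⟫ ∂μ = ∫ p, ⟪a p.1 - a p.2, k p⟫ ∂μ.prod μ := by
  have hfst : ∫ x, ⟪a x, ∫ y, k (x, y) ∂μ⟫ ∂μ = ∫ p, ⟪a p.1, k p⟫ ∂μ.prod μ := by
    simp_rw [← integral_inner (hk_int _)]
    exact integral_integral hak
  have hsnd : ∫ p, ⟪a p.2, k p⟫ ∂μ.prod μ = -∫ p, ⟪a p.1, k p⟫ ∂μ.prod μ := by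
    rw [← integral_prod_swap, ← integral_neg]
    simp [hk]
  have hak' : Integrable (fun p => ⟪a p.2, k p⟫) (μ.prod μ) := by
    simpa [Function.comp_def, hk] using hak.swap.neg
  simp only [inner_sub_left]
  rw [integral_sub hak hak', hsnd, hfst]
  ring

theorem integral_norm_sub_sq_prod {X E : Type*} [TopologicalSpace X] [T2Space X]
    [SecondCountableTopology X] [MeasurableSpace X] [OpensMeasurableSpace X] {μ : Measure X}
    [IsProbabilityMeasure μ] {K : Set X} [NormedAddCommGroup E] [InnerProductSpace ℝ E]
    [CompleteSpace E] (hK : IsCompact K) (hμK : μ Kᶜ = 0) {u : X → E} (hu : Continuous u) :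
    ∫ p, ‖u p.1 - u p.2‖ ^ 2 ∂μ.prod μ = 2 * ((∫ x, ‖u x‖ ^ 2 ∂μ) - ‖∫ x, u x ∂μ‖ ^ 2) := by
  have hint : ∀ {g : X × X → ℝ}, Continuous g → Integrable g (μ.prod μ) :=
    fun hg => hg.integrable_prod_of_measure_compl_eq_zero hK hμK
  have hu_int := hu.integrable_of_measure_compl_eq_zero hK hμK
  have hcross : ∫ p, ⟪u p.1, u p.2⟫ ∂μ.prod μ = ‖∫ x, u x ∂μ‖ ^ 2 := by
    rw [integral_prod _ (hint (by fun_prop))]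
    dsimp only
    simp_rw [integral_inner hu_int, real_inner_comm (∫ x, u x ∂μ)]
    rw [integral_inner hu_int, real_inner_self_eq_norm_sq]
  have h1 : Integrable (fun p : X × X => ‖u p.1‖ ^ 2) (μ.prod μ) := hint (by fun_prop)
  have h2 : Integrable (fun p : X × X => 2 * ⟪u p.1, u p.2⟫) (μ.prod μ) := hint (by fun_prop)
  have h3 : Integrable (fun p : X × X => ‖u p.2‖ ^ 2) (μ.prod μ) := hint (by fun_prop)
  simp_rw [norm_sub_sq_real]
  rw [integral_add (f := fun p => ‖u p.1‖ ^ 2 - 2 * ⟪u p.1, u p.2⟫) (h1.sub h2) h3,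
    integral_sub h1 h2, integral_const_mul, hcross, integral_fun_fst (fun x => ‖u x‖ ^ 2),
    integral_fun_snd (fun x => ‖u x‖ ^ 2)]
  simp only [probReal_univ, smul_eq_mul, one_mul]
  ring

noncomputable def flockingKernel {d : ℕ} (Φ : ℝ → ℝ) (G : Euc d → Euc d) (F : ℝ → ℝ) (α : ℝ)
    (μ : Measure (Phase d)) (p : Phase d × Phase d) : Euc d :=
  -(Φ ‖p.1.1 - p.2.1‖ • G (p.1.2 - p.2.2))
    + velFluc μ ^ ((2 * α - 1) / 2) • (F (‖p.1.1 - p.2.1‖ ^ 2) • (p.1.1 - p.2.1))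

noncomputable def velFlucRate {d : ℕ} (Φ : ℝ → ℝ) (G : Euc d → Euc d) (F : ℝ → ℝ) (α : ℝ)
    (μ : Measure (Phase d)) : ℝ :=
  (∫ z, 2 * ⟪z.2, Hfield Φ G F α μ z.1 z.2⟫ ∂μ)
    - 2 * ⟪∫ z, z.2 ∂μ, ∫ z, Hfield Φ G F α μ z.1 z.2 ∂μ⟫

section Flocking

variable {d : ℕ} {Φ F : ℝ → ℝ} {G : Euc d → Euc d} {α : ℝ} {μ : Measure (Phase d)}

theorem flockingKernel_swap (hGodd : ∀ v, G (-v) = -G v) (p : Phase d × Phase d) :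
    flockingKernel Φ G F α μ p.swap = -flockingKernel Φ G F α μ p := by
  obtain ⟨⟨x, v⟩, ⟨y, w⟩⟩ := p
  simp only [flockingKernel, Prod.fst_swap, Prod.snd_swap, ← neg_sub v w, ← neg_sub x y, hGodd,
    norm_neg, smul_neg, neg_add]

theorem continuous_flockingKernel (hΦc : Continuous Φ) (hGc : Continuous G)
    (hFc : Continuous F) : Continuous (flockingKernel Φ G F α μ) := by
  unfold flockingKernel
  fun_prop

theorem Hfield_eq_integral_flockingKernel (hΦc : Continuous Φ) (hGc : Continuous G)
    (hFc : Continuous F) [IsFiniteMeasure μ] {K : Set (Phase d)} (hK : IsCompact K)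
    (hμK : μ Kᶜ = 0) (z : Phase d) :
    Hfield Φ G F α μ z.1 z.2 = ∫ z', flockingKernel Φ G F α μ (z, z') ∂μ := by
  have hint : ∀ {g : Phase d → Euc d}, Continuous g → Integrable g μ :=
    fun hg => hg.integrable_of_measure_compl_eq_zero hK hμK
  rw [Hfield, ← integral_neg, ← integral_smul, ← integral_add (hint (by fun_prop))
    (hint (by fun_prop))]
  rfl

theorem inner_flockingKernel_le {Φs Gs Fs : ℝ} (hΦs : 0 ≤ Φs) (hGs : 0 ≤ Gs)
    (hGcoer : ∀ v : Euc d, Gs * ‖v‖ ^ (2 * α) ≤ ⟪G v, v⟫) (hΦlow : ∀ x : Euc d, Φs ≤ Φ ‖x‖)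
    (hFbd : ∀ x : Euc d, ‖F (‖x‖ ^ 2) • x‖ ≤ Fs) (hμ : 0 ≤ velFluc μ) (p : Phase d × Phase d) :
    ⟪p.1.2 - p.2.2, flockingKernel Φ G F α μ p⟫
      ≤ -(Φs * Gs) * ‖p.1.2 - p.2.2‖ ^ (2 * α)
        + velFluc μ ^ ((2 * α - 1) / 2) * Fs * ‖p.1.2 - p.2.2‖ := by
  obtain ⟨⟨x, v⟩, ⟨x', v'⟩⟩ := p
  have hG : Φs * (Gs * ‖v - v'‖ ^ (2 * α)) ≤ Φ ‖x - x'‖ * ⟪v - v', G (v - v')⟫ := by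
    rw [real_inner_comm]
    exact mul_le_mul (hΦlow _) (hGcoer _) (by positivity) (hΦs.trans (hΦlow _))
  have hF : ⟪v - v', F (‖x - x'‖ ^ 2) • (x - x')⟫ ≤ ‖v - v'‖ * Fs :=
    (real_inner_le_norm _ _).trans (mul_le_mul_of_nonneg_left (hFbd _) (norm_nonneg _))
  have hc : 0 ≤ velFluc μ ^ ((2 * α - 1) / 2) := Real.rpow_nonneg hμ _
  simp only [flockingKernel, inner_add_right, inner_neg_right, real_inner_smul_right] at hF ⊢
  nlinarith [mul_le_mul_of_nonneg_left hF hc]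

end Flocking

section Estimate

variable {d : ℕ} {Φ F : ℝ → ℝ} {G : Euc d → Euc d} {α : ℝ} {μ : Measure (Phase d)}
  [IsProbabilityMeasure μ] {K : Set (Phase d)}

theorem two_mul_velFluc_eq_integral (hK : IsCompact K) (hμK : μ Kᶜ = 0) :
    2 * velFluc μ = ∫ p, ‖p.1.2 - p.2.2‖ ^ 2 ∂μ.prod μ :=
  (integral_norm_sub_sq_prod hK hμK continuous_snd).symm

theorem velFluc_nonneg (hK : IsCompact K) (hμK : μ Kᶜ = 0) : 0 ≤ velFluc μ := by
  have := two_mul_velFluc_eq_integral hK hμK ▸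
    integral_nonneg fun p : Phase d × Phase d => sq_nonneg ‖p.1.2 - p.2.2‖
  linarith

theorem rpow_two_mul_velFluc_le_integral (hα : 1 ≤ α) (hK : IsCompact K) (hμK : μ Kᶜ = 0) :
    (2 * velFluc μ) ^ α ≤ ∫ p, ‖p.1.2 - p.2.2‖ ^ (2 * α) ∂μ.prod μ := by
  have hq : Continuous fun p : Phase d × Phase d => ‖p.1.2 - p.2.2‖ ^ 2 := by fun_prop
  have := (convexOn_rpow hα).map_integral_le
    (Real.continuous_rpow_const (by linarith)).continuousOn isClosed_Ici
    (ae_of_all _ fun _ => mem_Ici.2 (sq_nonneg _))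
    (hq.integrable_prod_of_measure_compl_eq_zero hK hμK)
    ((hq.rpow_const fun _ => Or.inr (by linarith)).integrable_prod_of_measure_compl_eq_zero hK hμK)
  rw [two_mul_velFluc_eq_integral hK hμK]
  refine this.trans_eq (integral_congr_ae (ae_of_all _ fun p => ?_))
  simp only [← Real.rpow_natCast, ← Real.rpow_mul (norm_nonneg _), Nat.cast_ofNat]

theorem integral_norm_sub_le_sqrt_two_mul_velFluc (hK : IsCompact K) (hμK : μ Kᶜ = 0) :
    ∫ p, ‖p.1.2 - p.2.2‖ ∂μ.prod μ ≤ √(2 * velFluc μ) := by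
  have hq : Continuous fun p : Phase d × Phase d => ‖p.1.2 - p.2.2‖ ^ 2 := by fun_prop
  have := Real.strictConcaveOn_sqrt.concaveOn.le_map_integral Real.continuous_sqrt.continuousOn
    isClosed_Ici (ae_of_all _ fun _ => mem_Ici.2 (sq_nonneg _))
    (hq.integrable_prod_of_measure_compl_eq_zero hK hμK)
    ((Real.continuous_sqrt.comp hq).integrable_prod_of_measure_compl_eq_zero hK hμK)
  simpa only [Real.sqrt_sq (norm_nonneg _), ← two_mul_velFluc_eq_integral hK hμK] using this

theorem velFlucRate_eq_integral_inner_flockingKernel (hΦc : Continuous Φ) (hGc : Continuous G)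
    (hFc : Continuous F) (hGodd : ∀ v, G (-v) = -G v) (hK : IsCompact K) (hμK : μ Kᶜ = 0) :
    velFlucRate Φ G F α μ = ∫ p, ⟪p.1.2 - p.2.2, flockingKernel Φ G F α μ p⟫ ∂μ.prod μ := by
  have hk := continuous_flockingKernel (α := α) (μ := μ) hΦc hGc hFc
  have hk_int : ∀ z, Integrable (fun z' => flockingKernel Φ G F α μ (z, z')) μ := fun z =>
    (hk.comp (Continuous.prodMk_right z)).integrable_of_measure_compl_eq_zero hK hμK
  have hint : ∀ {g : Phase d × Phase d → ℝ}, Continuous g → Integrable g (μ.prod μ) :=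
    fun hg => hg.integrable_prod_of_measure_compl_eq_zero hK hμK
  have hsym := fun (a : Phase d → Euc d) (ha : Continuous a) =>
    two_mul_integral_inner_integral_of_antisymm (flockingKernel_swap hGodd) hk_int
      (hint ((ha.comp continuous_fst).inner hk))
  have hH_int : Integrable (fun z => ∫ z', flockingKernel Φ G F α μ (z, z') ∂μ) μ :=
    (hk.integrable_prod_of_measure_compl_eq_zero hK hμK).integral_prod_left
  -- Antisymmetry tested against the constant `∫ v dμ`: the mean velocity is conserved.
  have hmean : ⟪∫ z, z.2 ∂μ, ∫ z, ∫ z', flockingKernel Φ G F α μ (z, z') ∂μ ∂μ⟫ = 0 := by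
    rw [← integral_inner hH_int]
    simpa using hsym (fun _ => ∫ z, z.2 ∂μ) continuous_const
  simp only [velFlucRate, Hfield_eq_integral_flockingKernel hΦc hGc hFc hK hμK, hmean,
    integral_const_mul]
  simpa using hsym Prod.snd continuous_snd

theorem velFlucRate_le {Φs Gs Fs : ℝ} (hΦc : Continuous Φ) (hGc : Continuous G)
    (hFc : Continuous F) (hα : 1 ≤ α) (hΦs : 0 ≤ Φs) (hGs : 0 ≤ Gs)
    (hGodd : ∀ v, G (-v) = -G v) (hGcoer : ∀ v : Euc d, Gs * ‖v‖ ^ (2 * α) ≤ ⟪G v, v⟫)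
    (hΦlow : ∀ x : Euc d, Φs ≤ Φ ‖x‖) (hFbd : ∀ x : Euc d, ‖F (‖x‖ ^ 2) • x‖ ≤ Fs)
    (hK : IsCompact K) (hμK : μ Kᶜ = 0) :
    velFlucRate Φ G F α μ ≤ -(2 ^ α * Φs * Gs - √2 * Fs) * velFluc μ ^ α := by
  have hint : ∀ {g : Phase d × Phase d → ℝ}, Continuous g → Integrable g (μ.prod μ) :=
    fun hg => hg.integrable_prod_of_measure_compl_eq_zero hK hμK
  have hw : Continuous fun p : Phase d × Phase d => ‖p.1.2 - p.2.2‖ := by fun_prop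
  have hw2α : Continuous fun p : Phase d × Phase d => ‖p.1.2 - p.2.2‖ ^ (2 * α) :=
    hw.rpow_const fun _ => Or.inr (by positivity)
  have h𝒢 := velFluc_nonneg hK hμK
  have hFs : 0 ≤ Fs := (norm_nonneg _).trans (hFbd 0)
  have hc : 0 ≤ velFluc μ ^ ((2 * α - 1) / 2) := Real.rpow_nonneg h𝒢 _
  have hk := continuous_flockingKernel (α := α) (μ := μ) hΦc hGc hFc
  calc velFlucRate Φ G F α μ
      = ∫ p, ⟪p.1.2 - p.2.2, flockingKernel Φ G F α μ p⟫ ∂μ.prod μ :=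
        velFlucRate_eq_integral_inner_flockingKernel hΦc hGc hFc hGodd hK hμK
    _ ≤ ∫ p, (-(Φs * Gs) * ‖p.1.2 - p.2.2‖ ^ (2 * α)
          + velFluc μ ^ ((2 * α - 1) / 2) * Fs * ‖p.1.2 - p.2.2‖) ∂μ.prod μ :=
        integral_mono (hint (Continuous.inner (by fun_prop) hk))
          (hint (by fun_prop)) (inner_flockingKernel_le hΦs hGs hGcoer hΦlow hFbd h𝒢)
    _ = -(Φs * Gs) * ∫ p, ‖p.1.2 - p.2.2‖ ^ (2 * α) ∂μ.prod μ
          + velFluc μ ^ ((2 * α - 1) / 2) * Fs * ∫ p, ‖p.1.2 - p.2.2‖ ∂μ.prod μ := by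
        rw [integral_add ((hint hw2α).const_mul _) ((hint hw).const_mul _), integral_const_mul,
          integral_const_mul]
    _ ≤ -(Φs * Gs) * (2 * velFluc μ) ^ α
          + velFluc μ ^ ((2 * α - 1) / 2) * Fs * √(2 * velFluc μ) := by
        gcongr ?_ + ?_
        · exact mul_le_mul_of_nonpos_left (rpow_two_mul_velFluc_le_integral hα hK hμK)
            (by nlinarith)
        · exact mul_le_mul_of_nonneg_left (integral_norm_sub_le_sqrt_two_mul_velFluc hK hμK)
            (mul_nonneg hc hFs)
    _ = -(2 ^ α * Φs * Gs - √2 * Fs) * velFluc μ ^ α := by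
        rw [Real.mul_rpow zero_le_two h𝒢, Real.sqrt_mul zero_le_two,
          ← rpow_sub_half_mul_sqrt h𝒢 (by linarith : α ≠ 0),
          show (2 * α - 1) / 2 = α - 1 / 2 by ring]
        ring

end Estimate

section WeakSolution

variable {d : ℕ} {Φ F : ℝ → ℝ} {G : Euc d → Euc d} {α : ℝ} {I : Set ℝ}
  {f : ℝ → Measure (Phase d)}

theorem IsWeakSolution.hasDerivWithinAt_velFluc (hsol : IsWeakSolution Φ G F α I f)
    (hΦc : Continuous Φ) (hGc : Continuous G) (hFc : Continuous F) {t : ℝ} (ht : t ∈ I) :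
    HasDerivWithinAt (fun s => velFluc (f s)) (velFlucRate Φ G F α (f t)) I t := by
  obtain ⟨hreg, hweak⟩ := hsol
  have hsq : HasDerivWithinAt (fun s => ∫ z, ‖z.2‖ ^ 2 ∂f s)
      (∫ z, 2 * ⟪z.2, Hfield Φ G F α (f t) z.1 z.2⟫ ∂f t) I t := by
    refine (hweak (fun z => ‖z.2‖ ^ 2) ((contDiff_norm_sq ℝ).comp contDiff_snd) t ht).congr_deriv
      (integral_congr_ae (ae_of_all _ fun z => ?_))
    dsimp only
    rw [(hasFDerivAt_snd (p := z)).norm_sq.fderiv]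
    simp [two_mul]
  have hmean : HasDerivWithinAt (fun s => ∫ z, z.2 ∂f s)
      (∫ z, Hfield Φ G F α (f t) z.1 z.2 ∂f t) I t := by
    have hint : ∀ s ∈ I, Integrable (fun z : Phase d => z.2) (f s) := fun s hs => by
      obtain ⟨_, K, hK, hμK⟩ := hreg s hs
      exact continuous_snd.integrable_of_measure_compl_eq_zero hK hμK
    have hH_int : Integrable (fun z => Hfield Φ G F α (f t) z.1 z.2) (f t) := by
      obtain ⟨_, K, hK, hμK⟩ := hreg t ht
      simp only [Hfield_eq_integral_flockingKernel hΦc hGc hFc hK hμK]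
      exact ((continuous_flockingKernel hΦc hGc hFc).integrable_prod_of_measure_compl_eq_zero
        hK hμK).integral_prod_left
    rw [hasDerivWithinAt_piLp]
    intro i
    have hcoord : ∀ s ∈ I, (∫ z, z.2 ∂f s) i = ∫ z, z.2 i ∂f s := fun s hs =>
      ((EuclideanSpace.proj i).integral_comp_comm (hint s hs)).symm
    let L : Phase d →L[ℝ] ℝ := (EuclideanSpace.proj i).comp (ContinuousLinearMap.snd ℝ _ _)
    refine ((hweak L L.contDiff t ht).congr hcoord (hcoord t ht)).congr_deriv ?_
    simp_rw [L.fderiv]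
    exact (EuclideanSpace.proj i).integral_comp_comm hH_int
  exact hsq.sub hmean.norm_sq

end WeakSolution

theorem stmt8_general {d : ℕ} (Φ F : ℝ → ℝ) (G : Euc d → Euc d) (α : ℝ)
    (hΦc : Continuous Φ) (hGc : Continuous G) (hFc : Continuous F)
    (hα : 1 < α ∧ α < 3 / 2)
    (Gs Φs Fs : ℝ) (hGs : 0 < Gs) (hΦs : 0 < Φs)
    (hGodd : ∀ v : Euc d, G (-v) = -G v)
    (hGcoer : ∀ v : Euc d, Gs * ‖v‖ ^ (2 * α) ≤ ⟪G v, v⟫)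
    (hΦlow : ∀ x : Euc d, Φs ≤ Φ ‖x‖)
    (hFbd : ∀ x : Euc d, ‖F (‖x‖ ^ 2) • x‖ ≤ Fs)
    (hFs : Fs < (2 : ℝ) ^ (α - 1 / 2) * Φs * Gs)
    (T : ℝ)
    (f : ℝ → Measure (Phase d))
    (hsol : IsWeakSolution Φ G F α (Set.Ico 0 T) f) :
    (0 < velFluc (f 0) →
      ∀ t ∈ Set.Ico (0 : ℝ) T,
        velFluc (f t) ≤
          (velFluc (f 0) ^ (1 - α) + (α - 1) * ((2 : ℝ) ^ α * Φs * Gs - Real.sqrt 2 * Fs) * t)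
            ^ (-(1 / (α - 1)))) ∧
    (velFluc (f 0) = 0 → ∀ t ∈ Set.Ico (0 : ℝ) T, velFluc (f t) = 0) := by
  have hC : 0 < (2 : ℝ) ^ α * Φs * Gs - √2 * Fs := by
    have h2 : √2 * (2 ^ (α - 1 / 2) * Φs * Gs) = 2 ^ α * Φs * Gs := by
      rw [Real.sqrt_eq_rpow, ← mul_assoc, ← mul_assoc, ← Real.rpow_add two_pos]
      ring_nf
    linarith [mul_lt_mul_of_pos_left hFs (Real.sqrt_pos.2 two_pos)]
  have hderiv : ∀ t ∈ Ico 0 T, HasDerivWithinAt (fun s => velFluc (f s))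
      (velFlucRate Φ G F α (f t)) (Ico 0 T) t :=
    fun t ht => hsol.hasDerivWithinAt_velFluc hΦc hGc hFc ht
  have hrate : ∀ t ∈ Ico 0 T, velFlucRate Φ G F α (f t)
      ≤ -((2 : ℝ) ^ α * Φs * Gs - √2 * Fs) * velFluc (f t) ^ α := fun t ht => by
    obtain ⟨_, K, hK, hμK⟩ := hsol.1 t ht
    exact velFlucRate_le hΦc hGc hFc hα.1.le hΦs.le hGs.le hGodd hGcoer hΦlow hFbd hK hμK
  have hnonneg : ∀ t ∈ Ico 0 T, 0 ≤ velFluc (f t) := fun t ht => by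
    obtain ⟨_, K, hK, hμK⟩ := hsol.1 t ht
    exact velFluc_nonneg hK hμK
  exact ⟨fun h0 _ ht => le_bernoulliBarrier hα.1 hC hderiv hrate h0 ht,
    fun h0 _ ht => eq_zero_of_hasDerivWithinAt_le_neg_mul_rpow hC.le hderiv hrate hnonneg h0 ht⟩

/-- algebraic decay of the velocity fluctuation when 1 < α < 3/2. -/
theorem stmt8 {d : ℕ} (hd : 1 ≤ d) (Φ F : ℝ → ℝ) (G : Euc d → Euc d) (α : ℝ)
    (hΦc : Continuous Φ) (hGc : Continuous G) (hFc : Continuous F)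
    (hα : 1 < α ∧ α < 3 / 2)
    (Gs Φs Fs : ℝ) (hGs : 0 < Gs) (hΦs : 0 < Φs)
    (hGodd : ∀ v : Euc d, G (-v) = -G v)
    (hGcoer : ∀ v : Euc d, Gs * ‖v‖ ^ (2 * α) ≤ ⟪G v, v⟫)
    (hΦlow : ∀ x : Euc d, Φs ≤ Φ ‖x‖)
    (hFbd : ∀ x : Euc d, ‖F (‖x‖ ^ 2) • x‖ ≤ Fs)
    (hFs : Fs < (2 : ℝ) ^ (α - 1 / 2) * Φs * Gs)
    (T : ℝ) (hT : 0 < T)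
    (f : ℝ → Measure (Phase d))
    (hsol : IsWeakSolution Φ G F α (Set.Ico 0 T) f) :
    (0 < velFluc (f 0) →
      ∀ t ∈ Set.Ico (0 : ℝ) T,
        velFluc (f t) ≤
          (velFluc (f 0) ^ (1 - α) + (α - 1) * ((2 : ℝ) ^ α * Φs * Gs - Real.sqrt 2 * Fs) * t)
            ^ (-(1 / (α - 1)))) ∧
    (velFluc (f 0) = 0 → ∀ t ∈ Set.Ico (0 : ℝ) T, velFluc (f t) = 0) :=
  stmt8_general Φ F G α hΦc hGc hFc hα Gs Φs Fs hGs hΦs hGodd hGcoer hΦlow hFbd hFs T f hsol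
end

section
/- Assume: (1) x ↦ Φ(|x|), v ↦ G(v), x ↦ F(|x|²)x are locally Lipschitz; (2) G(−v) = −G(v) and G(v)·v ≥ G*|v|^{2α} for all v with G* > 0 and α ∈ [1,5/4); (3) Φ(|x|) ≥ Φ* > 0, |F(|x|²)x| ≤ F* for all x, with F* < 2^{α−1/2} Φ* G*; (4) |Φ(|x|)G(v)| ≤ C₀(1 + |x| + |v|) for all x, v. Let f₀ be a Borel probability measure supported in the ball B_{R₀} of ℝ^{2d} and let (f_t, 𝒯) be a measure-valued solution of the kinetic flocking equation on [0,T*) with initial datum f₀. Then there exists a constant C > 0 depending only on R₀ (and on Φ, G, F, α) such that supp f_t ⊂ B_{R(t)} for all t ∈ [0,T*), where R(t) = R₀ e^{Ct} + C (e^{Ct} − 1)^{1/2}. -/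
open MeasureTheory Filter
open scoped RealInnerProductSpace BigOperators ENNReal

/-!
The growth bound gives `‖G v‖ ≤ (C₀ / Φ*) (1 + ‖v‖)`, which is compatible with the coercivity
`G v · v ≥ G* ‖v‖^{2α}` only when `α = 1`. Then, if `f_t` is supported in the ball of radius `ρ`,
so that `𝒢[f_t]^{1/2} ≤ ρ`, the phase-space field `(v, H[f_t])` has size at most `K ρ + C₀` on that
ball, where `K = 4 C₀ + F* + 1` does not depend on `R₀`. A continuity argument in time, over the
compact set of initial data, shows that for every `R > R₀` all characteristics starting in `B_{R₀}`
stay strictly inside the Grönwall radius `R e^{Kt} + (C₀ / K)(e^{Kt} - 1)`. Letting `R ↓ R₀` and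
enlarging the constant gives the stated radius.
-/

open Set Filter Topology

section PhaseNorm

variable {d : ℕ}

lemma pnorm_eq_norm_toLp (z : Phase d) : pnorm z = ‖WithLp.toLp 2 z‖ := by
  rw [WithLp.prod_norm_eq_of_L2]
  rfl

lemma norm_fst_le_pnorm (z : Phase d) : ‖z.1‖ ≤ pnorm z :=
  Real.le_sqrt_of_sq_le (le_add_of_nonneg_right (sq_nonneg _))

lemma norm_snd_le_pnorm (z : Phase d) : ‖z.2‖ ≤ pnorm z :=
  Real.le_sqrt_of_sq_le (le_add_of_nonneg_left (sq_nonneg _))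

lemma pnorm_le_norm_fst_add_norm_snd (z : Phase d) : pnorm z ≤ ‖z.1‖ + ‖z.2‖ := by
  refine Real.sqrt_le_iff.2 ⟨by positivity, ?_⟩
  nlinarith [norm_nonneg z.1, norm_nonneg z.2]

lemma continuous_pnorm : Continuous (pnorm (d := d)) := by
  simp_rw [funext pnorm_eq_norm_toLp]
  fun_prop

lemma isCompact_pball (R : ℝ) : IsCompact (pball d R) := by
  have h : pball d R = WithLp.toLp 2 ⁻¹' Metric.closedBall 0 R := by
    ext z
    simp [pball, pnorm_eq_norm_toLp]
  rw [h]
  exact (WithLp.prodContinuousLinearEquiv 2 ℝ (Euc d) (Euc d)).symm.toHomeomorph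
    |>.isCompact_preimage.2 (isCompact_closedBall 0 R)

lemma pnorm_le_of_pnorm_deriv_right_le {γ γ' : ℝ → Phase d} {B B' : ℝ → ℝ} {a b : ℝ}
    (hγ : ContinuousOn γ (Icc a b)) (hγ' : ∀ t ∈ Ico a b, HasDerivWithinAt γ (γ' t) (Ici t) t)
    (ha : pnorm (γ a) ≤ B a) (hB : ∀ t, HasDerivAt B (B' t) t)
    (bound : ∀ t ∈ Ico a b, pnorm (γ' t) ≤ B' t) : ∀ ⦃t⦄, t ∈ Icc a b → pnorm (γ t) ≤ B t := by
  let e := (WithLp.prodContinuousLinearEquiv 2 ℝ (Euc d) (Euc d)).symm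
  simp only [pnorm_eq_norm_toLp] at ha bound ⊢
  exact image_norm_le_of_norm_deriv_right_le_deriv_boundary (f := fun t => e (γ t))
    (e.continuous.comp_continuousOn hγ)
    (fun t ht => e.hasFDerivAt.comp_hasDerivWithinAt t (hγ' t ht)) ha hB bound

end PhaseNorm

lemma le_one_of_coercive_of_linear_growth {E : Type*} [NormedAddCommGroup E]
    [InnerProductSpace ℝ E] [Nontrivial E] {G : E → E} {α a c : ℝ} (ha : 0 < a)
    (hcoer : ∀ v, a * ‖v‖ ^ (2 * α) ≤ ⟪G v, v⟫) (hgrowth : ∀ v, ‖G v‖ ≤ c * (1 + ‖v‖)) :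
    α ≤ 1 := by
  by_contra! hα
  obtain ⟨t, ht1, ht⟩ := ((eventually_ge_atTop 1).and
    ((tendsto_rpow_atTop (by linarith : 0 < 2 * α - 2)).eventually_gt_atTop (2 * c / a))).exists
  obtain ⟨v, hv⟩ := exists_norm_eq E (by linarith : (0 : ℝ) ≤ t)
  have hc : 0 ≤ c := by nlinarith [norm_nonneg (G v), hgrowth v]
  have hpow : t ^ (2 * α) = t ^ (2 * α - 2) * t ^ 2 := by
    rw [← Real.rpow_natCast, ← Real.rpow_add (by linarith)]
    norm_num
  have hquad : a * t ^ (2 * α - 2) * t ^ 2 ≤ 2 * c * t ^ 2 :=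
    calc a * t ^ (2 * α - 2) * t ^ 2 = a * ‖v‖ ^ (2 * α) := by rw [hv, hpow, mul_assoc]
      _ ≤ ⟪G v, v⟫ := hcoer v
      _ ≤ ‖G v‖ * t := hv ▸ real_inner_le_norm _ _
      _ ≤ c * (1 + t) * t := by gcongr; exact hv ▸ hgrowth v
      _ ≤ 2 * c * t ^ 2 := by
          nlinarith [mul_nonneg (mul_nonneg hc (sub_nonneg.2 ht1)) (by linarith : 0 ≤ t)]
  have : a * t ^ (2 * α - 2) ≤ 2 * c := le_of_mul_le_mul_right hquad (by positivity)
  rw [div_lt_iff₀ ha] at ht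
  linarith

lemma IsCompact.forall_lt_of_real_induction {Z : Type*} [TopologicalSpace Z] {K : Set Z}
    (hK : IsCompact K) {r : ℝ → Z → ℝ} {S : ℝ → ℝ} {a b : ℝ}
    (hr : ContinuousOn (fun p : ℝ × Z => r p.1 p.2) (Ico a b ×ˢ K)) (hS : Continuous S)
    (hstep : ∀ t ∈ Ico a b, (∀ u ∈ Ico a t, ∀ z ∈ K, r u z < S u) → ∀ z ∈ K, r t z < S t) :
    ∀ t ∈ Ico a b, ∀ z ∈ K, r t z < S t := by
  by_contra! hbad
  obtain ⟨t₀, ht₀, z₀, hz₀, hle₀⟩ := hbad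
  set Bad := {t | t ∈ Ico a b ∧ ∃ z ∈ K, S t ≤ r t z}
  have hne : Bad.Nonempty := ⟨t₀, ht₀, z₀, hz₀, hle₀⟩
  have hbdd : BddBelow Bad := ⟨a, fun t ht => ht.1.1⟩
  have hinf : sInf Bad ∈ Ico a b :=
    ⟨le_csInf hne fun t ht => ht.1.1, (csInf_le hbdd ⟨ht₀, z₀, hz₀, hle₀⟩).trans_lt ht₀.2⟩
  have hbelow : ∀ u ∈ Ico a (sInf Bad), ∀ z ∈ K, r u z < S u := fun u hu z hz =>
    not_le.1 fun h => notMem_of_lt_csInf hu.2 hbdd ⟨⟨hu.1, hu.2.trans hinf.2⟩, z, hz, h⟩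
  have hinf_good := hstep _ hinf hbelow
  have hnear : ∀ᶠ u in 𝓝 (sInf Bad), ∀ z ∈ K, u ∈ Ico a b → z ∈ K → r u z < S u := by
    refine hK.eventually_forall_of_forall_eventually fun z hz => ?_
    have hS' : Tendsto (fun p : ℝ × Z => S p.1) (𝓝[Ico a b ×ˢ K] (sInf Bad, z))
        (𝓝 (S (sInf Bad))) :=
      ((hS.comp continuous_fst).tendsto _).mono_left nhdsWithin_le_nhds
    have := (hr _ ⟨hinf, hz⟩).tendsto.eventually_lt hS' (hinf_good z hz)
    rw [eventually_nhdsWithin_iff] at this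
    filter_upwards [this] with p hp hpI hpK using hp ⟨hpI, hpK⟩
  obtain ⟨u, ⟨huI, z, hz, hle⟩, hu⟩ :=
    ((mem_closure_iff_frequently.1 (csInf_mem_closure hne hbdd)).and_eventually hnear).exists
  exact (hu z hz huI hz).not_ge hle

lemma gronwallBound_le_exp_add_sqrt {δ K A C t : ℝ} (hδ : 0 ≤ δ) (hK : 0 < K) (ht : 0 ≤ t)
    (hCK : 2 * K ≤ C) (hCA : A / K ≤ C) :
    gronwallBound δ K A t ≤ δ * Real.exp (C * t) + C * Real.sqrt (Real.exp (C * t) - 1) := by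
  rw [gronwallBound_of_K_ne_0 hK.ne']
  have hexp1 : 1 ≤ Real.exp (K * t) := Real.one_le_exp (by positivity)
  have hexpC : Real.exp (K * t) ≤ Real.exp (C * t) := by gcongr; linarith
  -- `(e - 1)² ≤ e² - 1` for `e ≥ 1`, and `e² = exp (2 K t) ≤ exp (C t)`
  have hsqrt : Real.exp (K * t) - 1 ≤ Real.sqrt (Real.exp (C * t) - 1) := by
    refine Real.le_sqrt_of_sq_le ?_
    have hsq : Real.exp (K * t) ^ 2 ≤ Real.exp (C * t) := by
      rw [← Real.exp_nat_mul]
      exact Real.exp_le_exp.2 (by push_cast; nlinarith)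
    nlinarith
  exact add_le_add (mul_le_mul_of_nonneg_left hexpC hδ)
    (mul_le_mul hCA hsqrt (by linarith) (by linarith))

section Flow

variable {d : ℕ} {Φ F : ℝ → ℝ} {G : Euc d → Euc d} {α : ℝ} {I : Set ℝ}
  {f₀ : Measure (Phase d)} {f : ℝ → Measure (Phase d)} {𝒯 : ℝ → Phase d → Phase d}

lemma IsMVSolution.continuous_apply (hsol : IsMVSolution Φ G F α I f₀ f 𝒯) {t : ℝ}
    (ht : t ∈ I) : Continuous (𝒯 t) :=
  continuousOn_univ.1 <| hsol.2.1.comp (f := fun z => (t, z))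
    (by fun_prop : Continuous _).continuousOn fun _ _ => ⟨ht, trivial⟩

lemma IsMVSolution.ae_pnorm_le (hsol : IsMVSolution Φ G F α I f₀ f 𝒯) {R₀ ρ t : ℝ}
    (h₀ : ∀ᵐ z ∂f₀, pnorm z ≤ R₀) (ht : t ∈ I) (hρ : ∀ z ∈ pball d R₀, pnorm (𝒯 t z) ≤ ρ) :
    ∀ᵐ w ∂(f t), pnorm w ≤ ρ := by
  rw [hsol.2.2.2.2.2 t ht, ae_map_iff (hsol.continuous_apply ht).aemeasurable
    (isClosed_le continuous_pnorm continuous_const).measurableSet]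
  filter_upwards [h₀] with z hz using hρ z hz

lemma abs_velFluc_le {μ : Measure (Phase d)} [IsProbabilityMeasure μ] {ρ : ℝ}
    (hμ : ∀ᵐ w ∂μ, ‖w.2‖ ≤ ρ) : |velFluc μ| ≤ ρ ^ 2 := by
  have hmean : ‖∫ w, w.2 ∂μ‖ ≤ ρ := by
    simpa using norm_integral_le_of_norm_le_const hμ
  have hsq : ‖∫ w, ‖w.2‖ ^ 2 ∂μ‖ ≤ ρ ^ 2 := by
    refine (norm_integral_le_of_norm_le_const (C := ρ ^ 2) ?_).trans (by simp)
    filter_upwards [hμ] with w hw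
    rw [norm_pow, norm_norm]
    exact pow_le_pow_left₀ (norm_nonneg _) hw 2
  have hsq_nonneg : 0 ≤ ∫ w, ‖w.2‖ ^ 2 ∂μ := integral_nonneg fun w => by positivity
  have hmean_sq : ‖∫ w, w.2 ∂μ‖ ^ 2 ≤ ρ ^ 2 := pow_le_pow_left₀ (norm_nonneg _) hmean 2
  rw [Real.norm_of_nonneg hsq_nonneg] at hsq
  unfold velFluc
  rw [abs_sub_le_iff]
  constructor <;> nlinarith [sq_nonneg ‖∫ w, w.2 ∂μ‖]

lemma norm_Hfield_one_le {C₀ Fs ρ : ℝ} {μ : Measure (Phase d)} [IsProbabilityMeasure μ]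
    (hgrowth : ∀ x v : Euc d, ‖Φ ‖x‖ • G v‖ ≤ C₀ * (1 + ‖x‖ + ‖v‖))
    (hFbd : ∀ x : Euc d, ‖F (‖x‖ ^ 2) • x‖ ≤ Fs)
    (hμ : ∀ᵐ w ∂μ, pnorm w ≤ ρ) {x v : Euc d} (hx : ‖x‖ ≤ ρ) (hv : ‖v‖ ≤ ρ) :
    ‖Hfield Φ G F 1 μ x v‖ ≤ C₀ * (1 + 4 * ρ) + ρ * Fs := by
  have hρ : 0 ≤ ρ := (norm_nonneg x).trans hx
  have hC₀ : 0 ≤ C₀ := by simpa using (norm_nonneg _).trans (hgrowth 0 0)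
  have halign : ‖∫ w, Φ ‖x - w.1‖ • G (v - w.2) ∂μ‖ ≤ C₀ * (1 + 4 * ρ) := by
    refine (norm_integral_le_of_norm_le_const (C := C₀ * (1 + 4 * ρ)) ?_).trans (by simp)
    filter_upwards [hμ] with w hw
    have h1 : ‖x - w.1‖ ≤ 2 * ρ := (norm_sub_le _ _).trans (by linarith [norm_fst_le_pnorm w])
    have h2 : ‖v - w.2‖ ≤ 2 * ρ := (norm_sub_le _ _).trans (by linarith [norm_snd_le_pnorm w])
    exact (hgrowth _ _).trans (mul_le_mul_of_nonneg_left (by linarith) hC₀)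
  have hattract : ‖∫ w, F (‖x - w.1‖ ^ 2) • (x - w.1) ∂μ‖ ≤ Fs :=
    (norm_integral_le_of_norm_le_const (Eventually.of_forall fun w => hFbd _)).trans (by simp)
  have hfluc : |velFluc μ ^ ((2 * (1 : ℝ) - 1) / 2)| ≤ ρ :=
    calc |velFluc μ ^ ((2 * (1 : ℝ) - 1) / 2)| ≤ |velFluc μ| ^ ((1 : ℝ) / 2) := by
          norm_num [Real.abs_rpow_le_abs_rpow]
      _ ≤ (ρ ^ 2) ^ ((1 : ℝ) / 2) := by
          gcongr
          exact abs_velFluc_le (hμ.mono fun w hw => (norm_snd_le_pnorm w).trans hw)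
      _ = ρ := by rw [← Real.sqrt_eq_rpow, Real.sqrt_sq hρ]
  calc ‖Hfield Φ G F 1 μ x v‖
      ≤ ‖∫ w, Φ ‖x - w.1‖ • G (v - w.2) ∂μ‖
        + |velFluc μ ^ ((2 * (1 : ℝ) - 1) / 2)|
          * ‖∫ w, F (‖x - w.1‖ ^ 2) • (x - w.1) ∂μ‖ := by
        unfold Hfield
        refine (norm_add_le _ _).trans_eq ?_
        rw [norm_neg, norm_smul, Real.norm_eq_abs]
    _ ≤ C₀ * (1 + 4 * ρ) + ρ * Fs := by gcongr

lemma pnorm_vectorField_le {C₀ Fs ρ : ℝ} {μ : Measure (Phase d)} [IsProbabilityMeasure μ]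
    (hgrowth : ∀ x v : Euc d, ‖Φ ‖x‖ • G v‖ ≤ C₀ * (1 + ‖x‖ + ‖v‖))
    (hFbd : ∀ x : Euc d, ‖F (‖x‖ ^ 2) • x‖ ≤ Fs)
    (hμ : ∀ᵐ w ∂μ, pnorm w ≤ ρ) {p : Phase d} (hp : pnorm p ≤ ρ) :
    pnorm (p.2, Hfield Φ G F 1 μ p.1 p.2) ≤ (4 * C₀ + Fs + 1) * ρ + C₀ := by
  have hv := (norm_snd_le_pnorm p).trans hp
  have hH := norm_Hfield_one_le hgrowth hFbd hμ ((norm_fst_le_pnorm p).trans hp) hv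
  linarith [pnorm_le_norm_fst_add_norm_snd (p.2, Hfield Φ G F 1 μ p.1 p.2)]

section Bootstrap

variable {C₀ Fs R₀ Ts : ℝ} (hsol : IsMVSolution Φ G F 1 (Ico 0 Ts) f₀ f 𝒯)
  (hgrowth : ∀ x v : Euc d, ‖Φ ‖x‖ • G v‖ ≤ C₀ * (1 + ‖x‖ + ‖v‖))
  (hFbd : ∀ x : Euc d, ‖F (‖x‖ ^ 2) • x‖ ≤ Fs) (h₀ : ∀ᵐ z ∂f₀, pnorm z ≤ R₀)
include hsol hgrowth hFbd h₀

lemma IsMVSolution.pnorm_lt_gronwallBound {R : ℝ} (hR : R₀ < R) :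
    ∀ t ∈ Ico 0 Ts, ∀ z ∈ pball d R₀,
      pnorm (𝒯 t z) < gronwallBound R (4 * C₀ + Fs + 1) C₀ t := by
  have ⟨_, hcont, hT0, hprob, hderiv, _⟩ := hsol
  set S := gronwallBound R (4 * C₀ + Fs + 1) C₀
  refine (isCompact_pball R₀).forall_lt_of_real_induction
    (continuous_pnorm.comp_continuousOn (hcont.mono (prod_mono subset_rfl (subset_univ _))))
    (continuous_iff_continuousAt.2 fun t => (hasDerivAt_gronwallBound _ _ _ t).continuousAt) ?_
  intro t ht hbelow z hz
  have hsub : Ico 0 t ⊆ Ico 0 Ts := Ico_subset_Ico_right ht.2.le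
  have hsupp : ∀ u ∈ Ico 0 t, ∀ᵐ w ∂(f u), pnorm w ≤ S u := fun u hu =>
    hsol.ae_pnorm_le h₀ (hsub hu) fun z hz => (hbelow u hu z hz).le
  -- compare with `S - (R - R₀)`, which starts at `R₀` and has the same derivative as `S`
  have hcomp := pnorm_le_of_pnorm_deriv_right_le (γ := fun u => 𝒯 u z)
    (B := fun u => S u - (R - R₀))
    (hcont.comp (by fun_prop : Continuous fun u : ℝ => (u, z)).continuousOn
      fun u hu => ⟨⟨hu.1, hu.2.trans_lt ht.2⟩, trivial⟩)
    (fun u hu => (hderiv z u (hsub hu)).mono_of_mem_nhdsWithin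
      (mem_of_superset (Ico_mem_nhdsGE (hu.2.trans ht.2)) (Ico_subset_Ico_left hu.1)))
    (by simp only [hT0, id, S, gronwallBound_x0]; linarith [show pnorm z ≤ R₀ from hz])
    (fun u => (hasDerivAt_gronwallBound _ _ _ u).sub_const _)
    (fun u hu => haveI := (hprob u (hsub hu)).1
      pnorm_vectorField_le hgrowth hFbd (hsupp u hu) (hbelow u hu z hz).le)
    ⟨ht.1, le_rfl⟩
  linarith

lemma IsMVSolution.pnorm_le_gronwallBound :
    ∀ t ∈ Ico 0 Ts, ∀ z ∈ pball d R₀,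
      pnorm (𝒯 t z) ≤ gronwallBound R₀ (4 * C₀ + Fs + 1) C₀ t := by
  intro t ht z hz
  have hcont : Continuous fun R => gronwallBound R (4 * C₀ + Fs + 1) C₀ t := by
    unfold gronwallBound
    split_ifs <;> fun_prop
  refine ge_of_tendsto ((hcont.tendsto R₀).mono_left (nhdsWithin_le_nhds (s := Ioi R₀))) ?_
  filter_upwards [self_mem_nhdsWithin] with R hR
  exact (hsol.pnorm_lt_gronwallBound hgrowth hFbd h₀ hR t ht z hz).le

end Bootstrap

end Flow

theorem stmt11_general {d : ℕ} (hd : 1 ≤ d) (Φ F : ℝ → ℝ) (G : Euc d → Euc d) (α : ℝ)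
    (hα : 1 ≤ α ∧ α < 3 / 2)
    (Gs Φs Fs C₀ : ℝ) (hGs : 0 < Gs) (hΦs : 0 < Φs) (hC₀ : 0 < C₀)
    (hGcoer : ∀ v : Euc d, Gs * ‖v‖ ^ (2 * α) ≤ ⟪G v, v⟫)
    (hΦlow : ∀ x : Euc d, Φs ≤ Φ ‖x‖)
    (hFbd : ∀ x : Euc d, ‖F (‖x‖ ^ 2) • x‖ ≤ Fs)
    (hgrowth : ∀ x v : Euc d, ‖Φ ‖x‖ • G v‖ ≤ C₀ * (1 + ‖x‖ + ‖v‖)) :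
    ∀ R₀ > (0 : ℝ), ∃ C > (0 : ℝ),
      ∀ (Ts : ℝ) (f₀ : Measure (Phase d)) (f : ℝ → Measure (Phase d))
        (𝒯 : ℝ → Phase d → Phase d),
        IsProbabilityMeasure f₀ → f₀ (pball d R₀)ᶜ = 0 →
        IsMVSolution Φ G F α (Set.Ico 0 Ts) f₀ f 𝒯 →
        ∀ t ∈ Set.Ico (0 : ℝ) Ts,
          f t (pball d (R₀ * Real.exp (C * t) + C * Real.sqrt (Real.exp (C * t) - 1)))ᶜ = 0 := by
  have hG : ∀ v : Euc d, ‖G v‖ ≤ C₀ / Φs * (1 + ‖v‖) := fun v => by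
    have h := hgrowth 0 v
    rw [norm_zero, add_zero, norm_smul, Real.norm_eq_abs] at h
    rw [div_mul_eq_mul_div, le_div_iff₀ hΦs]
    nlinarith [(by simpa using hΦlow 0 : Φs ≤ Φ 0).trans (le_abs_self _), norm_nonneg (G v)]
  have : Nontrivial (Euc d) := by
    have : NeZero d := ⟨by omega⟩
    infer_instance
  obtain rfl : α = 1 := le_antisymm (le_one_of_coercive_of_linear_growth hGs hGcoer hG) hα.1
  intro R₀ hR₀
  have hK : 0 < 4 * C₀ + Fs + 1 := by linarith [(norm_nonneg _).trans (hFbd 0)]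
  refine ⟨max (2 * (4 * C₀ + Fs + 1)) (C₀ / (4 * C₀ + Fs + 1)), by positivity, ?_⟩
  intro Ts f₀ f 𝒯 _ h₀ hsol t ht
  have h₀' : ∀ᵐ z ∂f₀, pnorm z ≤ R₀ := mem_ae_iff.2 h₀
  refine mem_ae_iff.1 (hsol.ae_pnorm_le h₀' ht fun z hz => ?_)
  exact (hsol.pnorm_le_gronwallBound hgrowth hFbd h₀' t ht z hz).trans
    (gronwallBound_le_exp_add_sqrt hR₀.le hK ht.1 (le_max_left _ _) (le_max_right _ _))

/-- explicit control of the growth of the support of the solution,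
with a constant depending only on `R₀` (and on Φ, G, F, α). -/
theorem stmt11 {d : ℕ} (hd : 1 ≤ d) (Φ F : ℝ → ℝ) (G : Euc d → Euc d) (α : ℝ)
    (hΦc : Continuous Φ) (hGc : Continuous G) (hFc : Continuous F)
    (hα : 1 ≤ α ∧ α < 3 / 2)
    (hα' : α < 5 / 4)
    (hΦlip : LocallyLipschitz (fun x : Euc d => Φ ‖x‖))
    (hGlip : LocallyLipschitz G)
    (hFlip : LocallyLipschitz (fun x : Euc d => F (‖x‖ ^ 2) • x))
    (Gs Φs Fs C₀ : ℝ) (hGs : 0 < Gs) (hΦs : 0 < Φs) (hC₀ : 0 < C₀)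
    (hGodd : ∀ v : Euc d, G (-v) = -G v)
    (hGcoer : ∀ v : Euc d, Gs * ‖v‖ ^ (2 * α) ≤ ⟪G v, v⟫)
    (hΦlow : ∀ x : Euc d, Φs ≤ Φ ‖x‖)
    (hFbd : ∀ x : Euc d, ‖F (‖x‖ ^ 2) • x‖ ≤ Fs)
    (hFs : Fs < (2 : ℝ) ^ (α - 1 / 2) * Φs * Gs)
    (hgrowth : ∀ x v : Euc d, ‖Φ ‖x‖ • G v‖ ≤ C₀ * (1 + ‖x‖ + ‖v‖)) :
    ∀ R₀ > (0 : ℝ), ∃ C > (0 : ℝ),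
      ∀ (Ts : ℝ) (f₀ : Measure (Phase d)) (f : ℝ → Measure (Phase d))
        (𝒯 : ℝ → Phase d → Phase d),
        IsProbabilityMeasure f₀ → f₀ (pball d R₀)ᶜ = 0 →
        IsMVSolution Φ G F α (Set.Ico 0 Ts) f₀ f 𝒯 →
        ∀ t ∈ Set.Ico (0 : ℝ) Ts,
          f t (pball d (R₀ * Real.exp (C * t) + C * Real.sqrt (Real.exp (C * t) - 1)))ᶜ = 0 :=
  stmt11_general hd Φ F G α hα Gs Φs Fs C₀ hGs hΦs hC₀ hGcoer hΦlow hFbd hgrowth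
end
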